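/- arXiv:2002.08389 — 5 statements merged into one kernel-verified Lean document; each statement's English description precedes it below -/
import Mathlib

section
/- Let θ : {−1,1}ⁿ → ℝ and φ : {−1,1}^m → ℝ satisfy Σ_z |θ(z)| = 1, Σ_x |φ(x)| = 1, and Σ_x φ(x) = 0. Define the dual block composition (θ ⋆ φ)(x_1, …, x_n) = 2ⁿ · θ(sgn(φ(x_1)), …, sgn(φ(x_n))) · Π_{i=1}^n |φ(x_i)| for x_i ∈ {−1,1}^m. Then Σ_{x ∈ ({−1,1}^m)ⁿ} |(θ ⋆ φ)(x)| = 1. -/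
/-!
Group the strings `x = (x_1, …, x_n)` by their sign pattern `z = (sgn φ(x_i))_i`. Since
`∑ φ = 0`, the positive and the negative part of `φ` each carry half of the mass `∑ |φ| = 1`,
so the mass `∑ ∏ |φ(x_i)|` of every sign class factorises as `∏ 1/2 = 2⁻ⁿ`, which the
factor `2ⁿ` cancels; what is left is `∑_z |θ z| = 1`.
-/

open Finset

theorem sum_abs_filter_neg_eq_half {α K : Type*} [Fintype α] [Field K] [LinearOrder K]
    [IsStrictOrderedRing K] (φ : α → K) (h0 : ∑ x, φ x = 0) (b : Bool) :
    ∑ x with decide (φ x < 0) = b, |φ x| = (∑ x, |φ x|) / 2 := by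
  have hsplit := sum_filter_add_sum_filter_not univ (fun x => φ x < 0) (fun x => |φ x|)
  have hbal : ∑ x with ¬φ x < 0, |φ x| = ∑ x with φ x < 0, |φ x| := by
    have := sum_filter_add_sum_filter_not univ (fun x => φ x < 0) φ
    rw [sum_congr rfl fun x hx => abs_of_neg (mem_filter.1 hx).2,
      sum_congr rfl fun x hx => abs_of_nonneg (not_lt.1 (mem_filter.1 hx).2), sum_neg_distrib]
    linarith
  cases b <;> simp only [decide_eq_true_eq, decide_eq_false_iff_not] <;> linarith

theorem sum_filter_comp_eq_prod_sum_filter {ι α β R : Type*} [Fintype ι] [DecidableEq ι]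
    [Fintype α] [DecidableEq β] [CommSemiring R] (s : α → β) (w : α → R) (z : ι → β) :
    ∑ x : ι → α with (fun i => s (x i)) = z, ∏ i, w (x i) =
      ∏ i, ∑ y with s y = z i, w y := by
  rw [prod_univ_sum]
  congr 1
  ext x
  simp [funext_iff]

/-- Dual block composition preserves the ℓ₁-norm.  Strings in `{-1,1}^m` are encoded as
`Fin m → Bool` with `true` representing `-1`; `sgn r = -1` iff `r < 0`, so the sign string
fed to `θ` records for each block whether `φ` is negative there. -/
theorem dual_block_composition_l1_norm (n m : ℕ)
    (θ : (Fin n → Bool) → ℝ) (φ : (Fin m → Bool) → ℝ)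
    (hθ : ∑ z, |θ z| = 1)
    (hφ1 : ∑ x, |φ x| = 1)
    (hφ0 : ∑ x, φ x = 0) :
    ∑ x : Fin n → Fin m → Bool,
        abs ((2 : ℝ) ^ n * θ (fun i => decide (φ (x i) < 0)) * ∏ i, |φ (x i)|) = 1 := by
  set sign : (Fin n → Fin m → Bool) → Fin n → Bool := fun x i => decide (φ (x i) < 0)
  have hfiber (z : Fin n → Bool) : ∑ x with sign x = z, ∏ i, |φ (x i)| = (1 / 2) ^ n := by
    refine (sum_filter_comp_eq_prod_sum_filter (fun y => decide (φ y < 0)) (|φ ·|) z).trans ?_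
    simp only [sum_abs_filter_neg_eq_half φ hφ0, hφ1, prod_const, card_univ, Fintype.card_fin]
  calc ∑ x, abs (2 ^ n * θ (sign x) * ∏ i, |φ (x i)|)
      = ∑ z, ∑ x with sign x = z, 2 ^ n * |θ z| * ∏ i, |φ (x i)| := by
        rw [← sum_fiberwise univ sign]
        refine sum_congr rfl fun z _ => sum_congr rfl fun x hx => ?_
        rw [(mem_filter.1 hx).2.symm, abs_mul, abs_mul, abs_pow, abs_two, abs_of_nonneg
          (prod_nonneg fun i _ => abs_nonneg (φ (x i)))]
    _ = ∑ z, |θ z| := by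
        refine sum_congr rfl fun z _ => ?_
        rw [← mul_sum, hfiber, mul_right_comm, ← mul_pow]
        norm_num
    _ = 1 := hθ
end

section
/- Let η < n be positive integers and let p_η : ℝⁿ → ℝ be the multilinear polynomial agreeing with z ↦ (−1)^η Π_{i=1}^η (|z| − i) on {−1,1}ⁿ. Then the sum of absolute values of its Fourier coefficients satisfies ‖p̂_η‖₁ ≤ η! · C(n + η, η). -/
/-!
Write `K = #{j | z j}`, so that `(-1)^η ∏ᵢ (K - i) = ∏ᵢ (i - K)` on the cube, and each factor
`i - K = (i - n/2) + ½ ∑ⱼ xⱼ` is affine with Fourier ℓ₁-norm `|i - n/2| + n/2 ≤ n + i`.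
Characters multiply by symmetric difference of their supports, so multiplying functions on the
cube convolves their coefficients and the Fourier ℓ₁-norm is submultiplicative; coefficients are
unique by orthogonality of characters. Hence `‖p̂_η‖₁ ≤ ∏_{i=1}^η (n + i) = η! C(n + η, η)`.
-/

open Finset

namespace BooleanFourier

variable {ι : Type*} [Fintype ι]

def boolSign (b : Bool) : ℝ := if b then -1 else 1

lemma boolSign_mul_self (b : Bool) : boolSign b * boolSign b = 1 := by
  cases b <;> norm_num [boolSign]

lemma sum_boolSign (z : ι → Bool) :
    ∑ j, boolSign (z j) = Fintype.card ι - 2 * #{j | z j} := by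
  have h (j : ι) : boolSign (z j) = 1 - 2 * if z j then 1 else 0 := by
    cases z j <;> norm_num [boolSign]
  simp only [h, sum_sub_distrib, ← mul_sum, sum_boole, sum_const, card_univ, nsmul_one]

variable [DecidableEq ι]

def walsh (S : Finset ι) (z : ι → Bool) : ℝ := ∏ i ∈ S, boolSign (z i)

lemma walsh_mul (S T : Finset ι) (z : ι → Bool) :
    walsh S z * walsh T z = walsh (symmDiff S T) z := by
  simp only [walsh]
  rw [← Fintype.prod_ite_mem S, ← Fintype.prod_ite_mem T, ← Fintype.prod_ite_mem (symmDiff S T),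
    ← prod_mul_distrib]
  refine prod_congr rfl fun i _ => ?_
  by_cases hS : i ∈ S <;> by_cases hT : i ∈ T <;> simp [hS, hT, mem_symmDiff, boolSign_mul_self]

lemma sum_walsh (U : Finset ι) :
    ∑ z : ι → Bool, walsh U z = if U = ∅ then 2 ^ Fintype.card ι else 0 := by
  have hcoord (i : ι) : ∑ b : Bool, (if i ∈ U then boolSign b else 1) = if i ∈ U then 0 else 2 := by
    split_ifs <;> norm_num [boolSign]
  simp only [walsh, ← Fintype.prod_ite_mem U]
  rw [← Fintype.prod_sum fun i (b : Bool) => if i ∈ U then boolSign b else 1]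
  simp only [hcoord]
  split_ifs with hU
  · simp [hU, card_univ]
  · obtain ⟨i, hi⟩ := nonempty_iff_ne_empty.2 hU
    exact prod_eq_zero (mem_univ i) (if_pos hi)

lemma sum_walsh_mul_walsh (S T : Finset ι) :
    ∑ z : ι → Bool, walsh S z * walsh T z = if S = T then 2 ^ Fintype.card ι else 0 := by
  simp only [walsh_mul, sum_walsh, ← bot_eq_empty, symmDiff_eq_bot]

def fourierEval (c : Finset ι → ℝ) (z : ι → Bool) : ℝ := ∑ S, c S * walsh S z

lemma sum_fourierEval_mul_walsh (c : Finset ι → ℝ) (T : Finset ι) :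
    ∑ z, fourierEval c z * walsh T z = 2 ^ Fintype.card ι * c T := by
  simp only [fourierEval, sum_mul, mul_assoc]
  rw [sum_comm]
  simp [← mul_sum, sum_walsh_mul_walsh, mul_comm]

lemma fourierEval_injective : Function.Injective (fourierEval (ι := ι)) := by
  intro c d h
  funext T
  have hT := sum_fourierEval_mul_walsh c T
  rw [h, sum_fourierEval_mul_walsh] at hT
  exact (mul_left_cancel₀ (by positivity) hT).symm

def fourierConv (c d : Finset ι → ℝ) (U : Finset ι) : ℝ := ∑ S, c S * d (symmDiff S U)

lemma fourierEval_fourierConv (c d : Finset ι → ℝ) (z : ι → Bool) :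
    fourierEval (fourierConv c d) z = fourierEval c z * fourierEval d z := by
  simp only [fourierEval, fourierConv, sum_mul]
  rw [sum_comm]
  refine sum_congr rfl fun S _ => ?_
  rw [mul_sum]
  refine (Fintype.sum_bijective (symmDiff S) (symmDiff_right_involutive S).bijective _ _
    fun T => ?_).symm
  rw [symmDiff_symmDiff_cancel_left, ← walsh_mul]
  ring

lemma sum_abs_fourierConv_le (c d : Finset ι → ℝ) :
    ∑ U, |fourierConv c d U| ≤ (∑ S, |c S|) * ∑ T, |d T| := by
  have hshift (S : Finset ι) : ∑ U, |d (symmDiff S U)| = ∑ T, |d T| :=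
    Fintype.sum_bijective (symmDiff S) (symmDiff_right_involutive S).bijective _ _ fun _ => rfl
  calc ∑ U, |fourierConv c d U|
      ≤ ∑ U, ∑ S, |c S| * |d (symmDiff S U)| := by
        refine sum_le_sum fun U _ => (abs_sum_le_sum_abs _ _).trans_eq ?_
        simp only [abs_mul]
    _ = (∑ S, |c S|) * ∑ T, |d T| := by
        rw [sum_comm, sum_mul]
        simp only [← mul_sum, hshift]

lemma exists_fourierEval_eq_prod {α : Type*} (A : Finset α) (f : α → Finset ι → ℝ) :
    ∃ d : Finset ι → ℝ, fourierEval d = (fun z => ∏ a ∈ A, fourierEval (f a) z) ∧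
      ∑ S, |d S| ≤ ∏ a ∈ A, ∑ S, |f a S| := by
  classical
  induction A using Finset.induction with
  | empty =>
    refine ⟨fun S => if S = ∅ then 1 else 0, funext fun z => ?_, ?_⟩
    · simp [fourierEval, walsh]
    · simp [apply_ite abs]
  | insert a A ha ih =>
    obtain ⟨d, hd, hd_abs⟩ := ih
    refine ⟨fourierConv (f a) d, funext fun z => ?_, ?_⟩
    · rw [fourierEval_fourierConv, hd, prod_insert ha]
    · rw [prod_insert ha]
      exact (sum_abs_fourierConv_le _ _).trans
        (mul_le_mul_of_nonneg_left hd_abs (sum_nonneg fun _ _ => abs_nonneg _))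

def affineCoeff (a b : ℝ) (S : Finset ι) : ℝ :=
  (if S = ∅ then a else 0) + ∑ j, if S = {j} then b else 0

lemma fourierEval_affineCoeff (a b : ℝ) (z : ι → Bool) :
    fourierEval (affineCoeff a b) z = a + b * ∑ j, boolSign (z j) := by
  simp only [fourierEval, affineCoeff, add_mul, sum_mul, ite_mul, zero_mul, sum_add_distrib]
  rw [sum_comm (s := univ (α := Finset ι))]
  simp [walsh, mul_sum]

lemma sum_abs_affineCoeff_le (a b : ℝ) :
    ∑ S : Finset ι, |affineCoeff a b S| ≤ |a| + Fintype.card ι * |b| := by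
  calc ∑ S : Finset ι, |affineCoeff a b S|
      ≤ ∑ S : Finset ι, (|if S = ∅ then a else 0| + ∑ j, |if S = {j} then b else 0|) :=
        sum_le_sum fun S _ => (abs_add_le _ _).trans (add_le_add_right (abs_sum_le_sum_abs _ _) _)
    _ = |a| + Fintype.card ι * |b| := by
        rw [sum_add_distrib, sum_comm (s := univ (α := Finset ι))]
        simp [apply_ite abs]

lemma fourierEval_affineCoeff_eq_sub_card (t : ℝ) (z : ι → Bool) :
    fourierEval (affineCoeff (t - Fintype.card ι / 2) (1 / 2)) z = t - #{j | z j} := by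
  rw [fourierEval_affineCoeff, sum_boolSign]
  ring

lemma sum_abs_affineCoeff_sub_card_le {t : ℝ} (ht : 0 ≤ t) :
    ∑ S : Finset ι, |affineCoeff (t - Fintype.card ι / 2) (1 / 2) S| ≤ Fintype.card ι + t := by
  have hcard : (0 : ℝ) ≤ Fintype.card ι := Nat.cast_nonneg _
  have habs : |t - Fintype.card ι / 2| ≤ t + Fintype.card ι / 2 :=
    abs_le.2 ⟨by linarith, by linarith⟩
  refine (sum_abs_affineCoeff_le _ _).trans ?_
  rw [abs_of_pos (by norm_num : (0 : ℝ) < 1 / 2)]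
  linarith

end BooleanFourier

lemma prod_Icc_add_eq_factorial_mul_choose (n k : ℕ) :
    ∏ i ∈ Icc 1 k, (n + i) = k.factorial * (n + k).choose k := by
  rw [← Nat.ascFactorial_eq_factorial_mul_choose]
  induction k with
  | zero => simp
  | succ k ih => rw [prod_Icc_succ_top (by omega), ih, Nat.ascFactorial_succ]; ring

open BooleanFourier

theorem p_eta_fourier_l1_general (n η : ℕ)
    (c : Finset (Fin n) → ℝ)
    (p : (Fin n → ℝ) → ℝ)
    (hp : ∀ y : Fin n → ℝ, p y = ∑ S : Finset (Fin n), c S * ∏ i ∈ S, y i)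
    (hval : ∀ z : Fin n → Bool,
      p (fun i => if z i then -1 else 1)
        = (-1 : ℝ) ^ η *
            ∏ i ∈ Finset.Icc 1 η, (((Finset.univ.filter fun j => z j).card : ℝ) - i)) :
    ∑ S : Finset (Fin n), |c S| ≤ (Nat.factorial η : ℝ) * ((n + η).choose η) := by
  set A : ℕ → Finset (Fin n) → ℝ := fun i => affineCoeff (i - Fintype.card (Fin n) / 2) (1 / 2)
  obtain ⟨d, hd, hd_abs⟩ := exists_fourierEval_eq_prod (Icc 1 η) A
  have hcd : fourierEval c = fourierEval d := by
    funext z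
    rw [hd, show fourierEval c z = p (fun i => if z i then -1 else 1) from (hp _).symm, hval]
    simp only [A, fourierEval_affineCoeff_eq_sub_card, ← neg_sub (#{j | z j} : ℝ), prod_neg,
      Nat.card_Icc, add_tsub_cancel_right]
  calc ∑ S, |c S| = ∑ S, |d S| := by rw [fourierEval_injective hcd]
    _ ≤ ∏ i ∈ Icc 1 η, ∑ S, |A i S| := hd_abs
    _ ≤ ∏ i ∈ Icc 1 η, ((n : ℝ) + i) := by
      refine prod_le_prod (fun _ _ => by positivity) fun i _ => ?_
      exact (sum_abs_affineCoeff_sub_card_le i.cast_nonneg).trans_eq (by rw [Fintype.card_fin])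
    _ = η.factorial * (n + η).choose η := by
      exact_mod_cast prod_Icc_add_eq_factorial_mul_choose n η

/-- The ℓ₁ norm of the Fourier coefficients of the multilinear polynomial `p_η` agreeing
with `z ↦ (-1)^η ∏_{i=1}^η (|z| - i)` on `{-1,1}ⁿ` is at most `η! · C(n+η, η)`. -/
theorem p_eta_fourier_l1 (n η : ℕ) (hη : 0 < η) (hηn : η < n)
    (c : Finset (Fin n) → ℝ)
    (p : (Fin n → ℝ) → ℝ)
    (hp : ∀ y : Fin n → ℝ, p y = ∑ S : Finset (Fin n), c S * ∏ i ∈ S, y i)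
    (hval : ∀ z : Fin n → Bool,
      p (fun i => if z i then -1 else 1)
        = (-1 : ℝ) ^ η *
            ∏ i ∈ Finset.Icc 1 η, (((Finset.univ.filter fun j => z j).card : ℝ) - i)) :
    ∑ S : Finset (Fin n), |c S| ≤ (Nat.factorial η : ℝ) * ((n + η).choose η) :=
  p_eta_fourier_l1_general n η c p hp hval
end

section
/- For integers m, R ≥ 1, define p : {−1,1}^R → ℝ by p(x) = 2·T_m((Σ_{i=1}^R x_i)/R + 1/R)/T_m(1 + 1/R) − 1, where T_m is the degree-m Chebyshev polynomial. Then p(1^R) = 1, and for every x ∈ {−1,1}^R with x ≠ 1^R, |p(x) − (−1)| ≤ 2/(1 + m²/R). In particular, p approximates OR_R pointwise to error 2/(1 + m²/R). -/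
/-!
On `[-1, 1]` the Chebyshev polynomial `T_m` is bounded by `1` in absolute value, while for `y ≥ 1`
it grows at least like `1 + m² (y - 1)`: the increments `T_{n+1}(y) - T_n(y)` start at `y - 1`
and grow by `2 (y - 1) T_{n+1}(y) ≥ 2 (y - 1)` at each step. At the all-`(+1)` input the argument
of `T_m` is exactly `1 + 1/R`, so `p = 1`; at any other input it lies in `[-1, 1]`, so
`|p + 1| ≤ 2 / T_m(1 + 1/R) ≤ 2 / (1 + m²/R)`.
-/

open Finset Polynomial.Chebyshev

namespace Polynomial.Chebyshev

theorem two_mul_add_one_mul_sub_one_le_eval_T_add_one_sub {x : ℝ} (hx : 1 ≤ x) (n : ℕ) :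
    (2 * n + 1) * (x - 1) ≤ (T ℝ (n + 1)).eval x - (T ℝ n).eval x := by
  induction n with
  | zero => simp
  | succ n ih =>
    have hrec : (T ℝ ((n + 1 : ℕ) + 1)).eval x
        = 2 * x * (T ℝ (n + 1)).eval x - (T ℝ n).eval x := by
      rw [Nat.cast_succ, add_assoc, one_add_one_eq_two, T_add_two]
      simp
    have hT : 1 ≤ (T ℝ (n + 1)).eval x := one_le_eval_T_real _ hx
    rw [hrec]
    push_cast
    nlinarith

theorem one_add_sq_mul_sub_one_le_eval_T {x : ℝ} (hx : 1 ≤ x) (n : ℕ) :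
    1 + (n : ℝ) ^ 2 * (x - 1) ≤ (T ℝ n).eval x := by
  induction n with
  | zero => simp
  | succ n ih =>
    have := two_mul_add_one_mul_sub_one_le_eval_T_add_one_sub hx n
    push_cast
    nlinarith

end Polynomial.Chebyshev

theorem Fintype.sum_ite_neg_one_one {ι α : Type*} [Fintype ι] [CommRing α] (x : ι → Bool) :
    ∑ i, (if x i then (-1 : α) else 1) = Fintype.card ι - 2 * #{i | x i} := by
  have hcard := card_filter_add_card_filter_not (s := univ) (fun i => x i = true)
  rw [card_univ] at hcard
  rw [sum_ite, sum_const, sum_const, ← hcard]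
  push_cast
  ring

theorem abs_sum_ite_neg_one_one_div_card_add_one_div_card_le_one {ι : Type*} [Fintype ι]
    {x : ι → Bool} (hx : x ≠ fun _ => false) :
    |(∑ i, (if x i then (-1 : ℝ) else 1)) / Fintype.card ι + 1 / Fintype.card ι| ≤ 1 := by
  obtain ⟨i, hi⟩ : ∃ i, x i = true := by simpa [funext_iff] using hx
  have hk : (1 : ℝ) ≤ #{i | x i} := by exact_mod_cast card_pos.2 ⟨i, by simpa using hi⟩
  have hkι : (#{i | x i} : ℝ) ≤ Fintype.card ι := by exact_mod_cast card_filter_le _ _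
  rw [Fintype.sum_ite_neg_one_one, ← add_div, abs_le, le_div_iff₀ (by linarith),
    div_le_iff₀ (by linarith)]
  constructor <;> linarith

theorem abs_two_mul_div_le_two_div {K : Type*} [Field K] [LinearOrder K] [IsStrictOrderedRing K]
    {a b d : K} (ha : |a| ≤ 1) (hd : 0 < d) (hdb : d ≤ b) :
    |2 * a / b| ≤ 2 / d := by
  have hb : 0 < b := hd.trans_le hdb
  rw [abs_div, abs_mul, abs_two, abs_of_pos hb]
  calc 2 * |a| / b ≤ 2 * 1 / b := by gcongr
    _ = 2 / b := by rw [mul_one]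
    _ ≤ 2 / d := by gcongr

theorem chebyshev_OR_approx_general (m R : ℕ) (hR : 1 ≤ R)
    (p : (Fin R → Bool) → ℝ)
    (hp : ∀ x : Fin R → Bool,
      p x = 2 * (Polynomial.Chebyshev.T ℝ m).eval
              ((∑ i, (if x i then (-1 : ℝ) else 1)) / (R : ℝ) + 1 / (R : ℝ)) /
            (Polynomial.Chebyshev.T ℝ m).eval (1 + 1 / (R : ℝ)) - 1) :
    p (fun _ => false) = 1 ∧
      ∀ x : Fin R → Bool, x ≠ (fun _ => false) →
        |p x - (-1)| ≤ 2 / (1 + (m : ℝ) ^ 2 / R) := by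
  have hR₀ : (0 : ℝ) < R := by exact_mod_cast hR
  have hden : 0 < 1 + (m : ℝ) ^ 2 / R := by positivity
  have hTm : 1 + (m : ℝ) ^ 2 / R ≤ (T ℝ m).eval (1 + 1 / (R : ℝ)) := by
    have h := one_add_sq_mul_sub_one_le_eval_T (x := 1 + 1 / R) (by simp) m
    rwa [add_sub_cancel_left, mul_one_div] at h
  refine ⟨?_, fun x hx => ?_⟩
  · have hT₀ : (T ℝ m).eval (1 + 1 / (R : ℝ)) ≠ 0 := (hden.trans_le hTm).ne'
    rw [hp]
    simp only [Bool.false_eq_true, if_false, sum_const, card_univ, Fintype.card_fin,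
      nsmul_eq_mul, mul_one, div_self hR₀.ne']
    rw [mul_div_assoc, div_self hT₀]
    norm_num
  · have hy := abs_sum_ite_neg_one_one_div_card_add_one_div_card_le_one hx
    rw [Fintype.card_fin] at hy
    rw [hp, sub_neg_eq_add, sub_add_cancel]
    exact abs_two_mul_div_le_two_div (abs_eval_T_real_le_one _ hy) hden hTm

/-- The scaled Chebyshev polynomial
`p(x) = 2·T_m((∑ x_i)/R + 1/R)/T_m(1 + 1/R) − 1` approximates `OR_R` pointwise to error
`2/(1 + m²/R)`: it equals `1` at the all-(+1) input and is within `2/(1 + m²/R)` of `-1`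
elsewhere.  The cube `{-1,1}^R` is encoded by `Fin R → Bool` with `true` representing `-1`. -/
theorem chebyshev_OR_approx (m R : ℕ) (hm : 1 ≤ m) (hR : 1 ≤ R)
    (p : (Fin R → Bool) → ℝ)
    (hp : ∀ x : Fin R → Bool,
      p x = 2 * (Polynomial.Chebyshev.T ℝ m).eval
              ((∑ i, (if x i then (-1 : ℝ) else 1)) / (R : ℝ) + 1 / (R : ℝ)) /
            (Polynomial.Chebyshev.T ℝ m).eval (1 + 1 / (R : ℝ)) - 1) :
    p (fun _ => false) = 1 ∧
      ∀ x : Fin R → Bool, x ≠ (fun _ => false) →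
        |p x - (-1)| ≤ 2 / (1 + (m : ℝ) ^ 2 / R) :=
  chebyshev_OR_approx_general m R hR p hp
end

section
/- Let θ : {−1,1}ⁿ → ℝ, φ : {−1,1}^m → ℝ, ψ : {−1,1}^p → ℝ be any functions. The dual block composition is associative: (θ ⋆ φ) ⋆ ψ = θ ⋆ (φ ⋆ ψ) as functions on {−1,1}^{n·m·p}. -/
/-!
On block `i`, the inner composition `φ ⋆ ψ` equals `φ(s_i) · c_i` with
`c_i = 2^|β| ∏_j |ψ(x_{ij})| ≥ 0`. Multiplying by `c_i > 0` does not change the sign of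
`φ(s_i)`, and if some `c_i = 0` both sides vanish, because the weight `∏_i c_i` is a factor
of both. What remains is a rearrangement of powers of two and of products.
-/

/-- The dual block composition of `θ : {-1,1}^α → ℝ` and `φ : {-1,1}^β → ℝ`, as a
function on `{-1,1}^{α×β}`.  `true` encodes `-1`, and `sgn r = -1` iff `r < 0`, so the
bit fed to `θ` in block `i` is `true` iff `φ` is negative on that block. -/
noncomputable def dbc {α β : Type} [Fintype α] [Fintype β]
    (θ : (α → Bool) → ℝ) (φ : (β → Bool) → ℝ) : (α × β → Bool) → ℝ :=
  fun x =>
    2 ^ Fintype.card α * θ (fun i => decide (φ (fun j => x (i, j)) < 0)) *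
      ∏ i, |φ (fun j => x (i, j))|

lemma mul_neg_iff_of_pos_right {a b : ℝ} (hb : 0 < b) : a * b < 0 ↔ a < 0 := by
  simpa using mul_lt_mul_iff_of_pos_right (b := a) (c := 0) hb

lemma apply_decide_mul_neg_mul_prod {ι : Type} [Fintype ι] (F : (ι → Bool) → ℝ)
    (f c : ι → ℝ) (hc : ∀ i, 0 ≤ c i) :
    F (fun i => decide (f i * c i < 0)) * ∏ i, c i =
      F (fun i => decide (f i < 0)) * ∏ i, c i := by
  by_cases hpos : ∀ i, 0 < c i
  · simp_rw [mul_neg_iff_of_pos_right (hpos _)]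
  · obtain ⟨i, hi⟩ := not_forall.1 hpos
    have hci : c i = 0 := le_antisymm (not_lt.1 hi) (hc i)
    rw [Finset.prod_eq_zero (Finset.mem_univ i) hci, mul_zero, mul_zero]

lemma dbc_apply_eq_mul {β γ : Type} [Fintype β] [Fintype γ]
    (φ : (β → Bool) → ℝ) (ψ : (γ → Bool) → ℝ) (y : β × γ → Bool) :
    dbc φ ψ y = φ (fun j => decide (ψ (fun k => y (j, k)) < 0)) *
      (2 ^ Fintype.card β * ∏ j, |ψ (fun k => y (j, k))|) := by
  simp only [dbc]
  ring

theorem dbc_assoc_prodAssoc {α β γ : Type} [Fintype α] [Fintype β] [Fintype γ]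
    (θ : (α → Bool) → ℝ) (φ : (β → Bool) → ℝ) (ψ : (γ → Bool) → ℝ)
    (x : α × β × γ → Bool) :
    dbc (dbc θ φ) ψ (x ∘ Equiv.prodAssoc α β γ) = dbc θ (dbc φ ψ) x := by
  set s : α → β → Bool := fun i j => decide (ψ (fun k => x (i, j, k)) < 0)
  set c : α → ℝ := fun i => 2 ^ Fintype.card β * ∏ j, |ψ (fun k => x (i, j, k))|
  have hc : ∀ i, 0 ≤ c i := fun i => by positivity
  have hinner : ∀ i, dbc φ ψ (fun q => x (i, q)) = φ (s i) * c i :=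
    fun i => dbc_apply_eq_mul φ ψ _
  have hprod : ∏ i, c i = 2 ^ (Fintype.card α * Fintype.card β) *
      ∏ i, ∏ j, |ψ (fun k => x (i, j, k))| := by
    rw [Finset.prod_mul_distrib, Finset.prod_const, Finset.card_univ, ← pow_mul']
  calc dbc (dbc θ φ) ψ (x ∘ Equiv.prodAssoc α β γ)
      = 2 ^ Fintype.card α * (∏ i, |φ (s i)|) *
          (θ (fun i => decide (φ (s i) < 0)) * ∏ i, c i) := by
        simp only [dbc, hprod, Fintype.card_prod, Fintype.prod_prod_type, Function.comp_apply,
          Equiv.prodAssoc_apply]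
        ring
    _ = 2 ^ Fintype.card α * (∏ i, |φ (s i)|) *
          (θ (fun i => decide (φ (s i) * c i < 0)) * ∏ i, c i) := by
        rw [apply_decide_mul_neg_mul_prod θ (fun i => φ (s i)) c hc]
    _ = dbc θ (dbc φ ψ) x := by
        rw [dbc]
        simp only [hinner, abs_mul, abs_of_nonneg (hc _), Finset.prod_mul_distrib]
        ring

/-- Dual block composition is associative: `(θ ⋆ φ) ⋆ ψ = θ ⋆ (φ ⋆ ψ)` (after the obvious
reindexing `(n × m) × p ≃ n × (m × p)` of the input bits). -/
theorem dbc_assoc (n m p : ℕ)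
    (θ : (Fin n → Bool) → ℝ) (φ : (Fin m → Bool) → ℝ) (ψ : (Fin p → Bool) → ℝ)
    (x : Fin n × Fin m × Fin p → Bool) :
    dbc (dbc θ φ) ψ (fun q => x (q.1.1, q.1.2, q.2)) = dbc θ (dbc φ ψ) x :=
  dbc_assoc_prodAssoc θ φ ψ x
end

section
/- Let ν be the product distribution on {−1,1}ⁿ where each coordinate is −1 independently with probability τ ∈ [0,1), and let η < n be a positive integer. Let p_η be the multilinear polynomial agreeing with z ↦ (−1)^η Π_{i=1}^η (|z| − i) on {−1,1}ⁿ, where |z| is the Hamming weight of z. Then E_{z∼ν}[|p_η(z)|] ≤ p_η(1ⁿ)·(1−τ)ⁿ·(1 + A), where A = C(n, η+1)·τ^{η+1}/(1−τ)ⁿ. -/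
/-!
With `k = |z|`, `|p_η(z)| = |∏_{i=1}^η (k - i)|` equals `η!` at `k = 0`, vanishes for
`1 ≤ k ≤ η`, and for `k > η` equals `(k-1)!/(k-1-η)! = η! C(k-1, η) ≤ η! C(k, η+1)`. So
`|p_η| ≤ η! ([k = 0] + C(k, η+1))` pointwise. Under `ν` the first term has mean `(1-τ)ⁿ`, and
`C(|z|, η+1)` counts the `(η+1)`-sets of coordinates that are all `-1`, each of which is so with
probability `τ^{η+1}`.
-/

open Finset
open scoped Nat

variable {ι : Type*} [Fintype ι]

def bernoulliWeight (τ : ℝ) (z : ι → Bool) : ℝ := ∏ i, if z i then τ else 1 - τ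

lemma bernoulliWeight_nonneg {τ : ℝ} (h0 : 0 ≤ τ) (h1 : τ ≤ 1) (z : ι → Bool) :
    0 ≤ bernoulliWeight τ z :=
  prod_nonneg fun i _ => by split <;> linarith

lemma sum_bernoulliWeight_mul_ite_card_eq_zero [DecidableEq ι] (τ : ℝ) :
    ∑ z : ι → Bool, bernoulliWeight τ z * (if #{j | z j} = 0 then 1 else 0)
      = (1 - τ) ^ Fintype.card ι := by
  have h : ∀ z : ι → Bool, #{j | z j} = 0 ↔ z = fun _ => false := by
    intro z
    simp only [card_eq_zero, filter_eq_empty_iff, mem_univ, true_implies, Bool.not_eq_true,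
      funext_iff]
  simp [h, bernoulliWeight]

lemma sum_filter_bernoulliWeight [DecidableEq ι] (τ : ℝ) (T : Finset ι) :
    ∑ z with ∀ i ∈ T, z i, bernoulliWeight τ z = τ ^ #T := by
  set f : ι → Bool → ℝ := fun i b => if i ∈ T → b then (if b then τ else 1 - τ) else 0
  have hprod : ∀ z : ι → Bool,
      (if ∀ i ∈ T, z i then bernoulliWeight τ z else 0) = ∏ i, f i (z i) := by
    intro z
    rw [prod_ite_zero]
    simp [bernoulliWeight]
  have hsum : ∀ i, ∑ b, f i b = if i ∈ T then τ else 1 := by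
    intro i
    by_cases hi : i ∈ T <;> simp [f, hi]
  rw [sum_filter, Fintype.sum_congr _ _ hprod, ← Fintype.prod_sum, Fintype.prod_congr _ _ hsum,
    prod_ite_mem, univ_inter, prod_const]

lemma sum_bernoulliWeight_mul_choose [DecidableEq ι] (τ : ℝ) (k : ℕ) :
    ∑ z : ι → Bool, bernoulliWeight τ z * (#{j | z j}).choose k
      = (Fintype.card ι).choose k * τ ^ k := by
  have hchoose : ∀ z : ι → Bool, ((#{j | z j}).choose k : ℝ) = ∑ T ∈ powersetCard k univ,
      if ∀ i ∈ T, z i then 1 else 0 := by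
    intro z
    rw [sum_boole, ← card_powersetCard]
    congr 2
    ext T
    simp [mem_powersetCard, subset_iff, and_comm]
  simp_rw [hchoose, mul_sum, mul_boole]
  rw [sum_comm]
  simp_rw [← sum_filter]
  rw [sum_congr rfl fun T hT => by rw [sum_filter_bernoulliWeight, (mem_powersetCard.1 hT).2],
    sum_const, card_powersetCard, card_univ, nsmul_eq_mul]

lemma prod_Icc_natCast_eq_factorial (η : ℕ) : ∏ i ∈ Icc 1 η, (i : ℝ) = η ! := by
  rw [← Ico_add_one_right_eq_Icc, ← prod_Ico_id_eq_factorial, Nat.cast_prod]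

lemma prod_Icc_abs_succ_sub_eq_descFactorial (m η : ℕ) :
    ∏ i ∈ Icc 1 η, |((m + 1 : ℕ) : ℝ) - i| = m.descFactorial η := by
  induction η with
  | zero => simp
  | succ η ih =>
    rw [prod_Icc_succ_top (by omega), ih, Nat.descFactorial_succ, Nat.cast_mul, mul_comm]
    rcases le_or_gt η m with h | h
    · rw [Nat.cast_sub h, Nat.cast_add_one, Nat.cast_add_one, add_sub_add_right_eq_sub,
        abs_of_nonneg (sub_nonneg.2 (by exact_mod_cast h))]
    · simp [Nat.descFactorial_eq_zero_iff_lt.2 h]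

lemma abs_prod_Icc_natCast_sub_le (η k : ℕ) :
    |∏ i ∈ Icc 1 η, ((k : ℝ) - i)| ≤ η ! * ((if k = 0 then 1 else 0) + k.choose (η + 1)) := by
  rw [abs_prod]
  rcases k with _ | m
  · simp [prod_Icc_natCast_eq_factorial]
  · rw [prod_Icc_abs_succ_sub_eq_descFactorial, Nat.descFactorial_eq_factorial_mul_choose,
      Nat.choose_succ_succ']
    push_cast
    rw [zero_add]
    gcongr
    exact le_add_of_nonneg_right (Nat.cast_nonneg _)

theorem p_eta_expectation_bound_general (n η : ℕ)
    (τ : ℝ) (hτ0 : 0 ≤ τ) (hτ1 : τ < 1)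
    (p : (Fin n → ℝ) → ℝ)
    (hval : ∀ z : Fin n → Bool,
      p (fun i => if z i then -1 else 1)
        = (-1 : ℝ) ^ η *
            ∏ i ∈ Finset.Icc 1 η, (((Finset.univ.filter fun j => z j).card : ℝ) - i)) :
    ∑ z : Fin n → Bool,
        (∏ i, (if z i then τ else 1 - τ)) * |p (fun i => if z i then -1 else 1)|
      ≤ p (fun _ => 1) * (1 - τ) ^ n *
          (1 + (n.choose (η + 1) : ℝ) * τ ^ (η + 1) / (1 - τ) ^ n) := by
  have hp1 : p (fun _ => 1) = η ! := by
    simpa [prod_neg, prod_Icc_natCast_eq_factorial, ← mul_assoc, ← mul_pow]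
      using hval fun _ => false
  have hpoint : ∀ z : Fin n → Bool, bernoulliWeight τ z * |p (fun i => if z i then -1 else 1)|
      ≤ η ! * (bernoulliWeight τ z * (if #{j | z j} = 0 then 1 else 0)
        + bernoulliWeight τ z * (#{j | z j}).choose (η + 1)) := by
    intro z
    rw [hval, abs_mul, abs_pow, abs_neg, abs_one, one_pow, one_mul, ← mul_add, mul_left_comm]
    exact mul_le_mul_of_nonneg_left (abs_prod_Icc_natCast_sub_le η _)
      (bernoulliWeight_nonneg hτ0 hτ1.le z)
  calc ∑ z : Fin n → Bool, bernoulliWeight τ z * |p (fun i => if z i then -1 else 1)|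
      ≤ η ! * ((1 - τ) ^ n + n.choose (η + 1) * τ ^ (η + 1)) := by
        grw [sum_le_sum fun z _ => hpoint z, ← mul_sum, sum_add_distrib,
          sum_bernoulliWeight_mul_ite_card_eq_zero, sum_bernoulliWeight_mul_choose, Fintype.card_fin]
    _ = _ := by
        rw [hp1]
        field_simp [(pow_pos (sub_pos.2 hτ1) n).ne']

/-- Bound on the expected absolute value of `p_η` under the product distribution on
`{-1,1}ⁿ` in which each coordinate is `-1` independently with probability `τ`:
`E[|p_η(z)|] ≤ p_η(1ⁿ)·(1-τ)ⁿ·(1 + A)` with `A = C(n, η+1)·τ^{η+1}/(1-τ)ⁿ`.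
`true` encodes `-1`, and `p_η` is the multilinear polynomial agreeing with
`z ↦ (-1)^η ∏_{i=1}^η (|z| - i)` on the cube. -/
theorem p_eta_expectation_bound (n η : ℕ) (hη : 0 < η) (hηn : η < n)
    (τ : ℝ) (hτ0 : 0 ≤ τ) (hτ1 : τ < 1)
    (c : Finset (Fin n) → ℝ)
    (p : (Fin n → ℝ) → ℝ)
    (hp : ∀ y : Fin n → ℝ, p y = ∑ S : Finset (Fin n), c S * ∏ i ∈ S, y i)
    (hval : ∀ z : Fin n → Bool,
      p (fun i => if z i then -1 else 1)
        = (-1 : ℝ) ^ η *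
            ∏ i ∈ Finset.Icc 1 η, (((Finset.univ.filter fun j => z j).card : ℝ) - i)) :
    ∑ z : Fin n → Bool,
        (∏ i, (if z i then τ else 1 - τ)) * |p (fun i => if z i then -1 else 1)|
      ≤ p (fun _ => 1) * (1 - τ) ^ n *
          (1 + (n.choose (η + 1) : ℝ) * τ ^ (η + 1) / (1 - τ) ^ n) :=
  p_eta_expectation_bound_general n η τ hτ0 hτ1 p hval
end
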